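/- arXiv:1912.10157 — 3 statements merged into one kernel-verified Lean document; each statement's English description precedes it below -/
import Mathlib

section
/- Let h ∈ ℂ^{N_b×N_b} be Hermitian, Δ ∈ ℂ^{N_b×N_b} be antisymmetric, and 𝓗 = [[h, Δ], [−Δ̄, −h̄]]. If 𝓗 is invertible (i.e., has no zero eigenvalue), then there exist matrices U, V ∈ ℂ^{N_b×N_b} and a diagonal matrix Λ ∈ ℝ^{N_b×N_b} with strictly positive diagonal entries such that the 2N_b×2N_b matrix W = [[U, V̄], [V, Ū]] is unitary and 𝓗 W = W [[Λ, 0], [0, −Λ]]. -/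
/-!
`𝓗` is Hermitian, and the antiunitary `C (x, y) = (ȳ, x̄)` anticommutes with it, so `C` maps
eigenvectors for `λ` to eigenvectors for `-λ`. If `v` is an orthonormal family of eigenvectors
whose eigenvalues all have the same sign, then `v` together with `C ∘ v` is again orthonormal,
so each sign occurs at most `N_b` times; as `0` is not an eigenvalue, each occurs exactly `N_b`
times. The positive eigenvectors `(U_{·k}, V_{·k})` and their images `(V̄_{·k}, Ū_{·k})` under `C`
are the columns of `W`.
-/

open Matrix Module
open scoped InnerProductSpace ComplexConjugate

section Anticommute

variable {E : Type*} [NormedAddCommGroup E] [InnerProductSpace ℂ E]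
  {T : E →ₗ[ℂ] E} {C : E →ₗ⋆[ℂ] E}

lemma apply_map_eq_neg_smul_of_anticommute (hTC : ∀ x, T (C x) = -C (T x)) {x : E} {μ : ℝ}
    (hx : T x = (μ : ℂ) • x) : T (C x) = -(μ : ℂ) • C x := by
  rw [hTC, hx, map_smulₛₗ, Complex.conj_ofReal, neg_smul]

namespace LinearMap.IsSymmetric

lemma inner_eq_zero_of_apply_eq_smul (hT : T.IsSymmetric) {x y : E} {μ ν : ℂ} (hμν : μ ≠ ν)
    (hx : T x = μ • x) (hy : T y = ν • y) : ⟪x, y⟫_ℂ = 0 :=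
  hT.orthogonalFamily_eigenspaces hμν ⟨x, End.mem_eigenspace_iff.mpr hx⟩
    ⟨y, End.mem_eigenspace_iff.mpr hy⟩

lemma orthonormal_sum_elim_of_anticommute (hT : T.IsSymmetric)
    (hC : ∀ x y, ⟪C x, C y⟫_ℂ = ⟪y, x⟫_ℂ) (hTC : ∀ x, T (C x) = -C (T x))
    {m : Type*} {v : m → E} (hv : Orthonormal ℂ v) {μ : m → ℝ}
    (hvμ : ∀ j, T (v j) = (μ j : ℂ) • v j) (hμ : ∀ j k, μ j + μ k ≠ 0) :
    Orthonormal ℂ (Sum.elim v (C ∘ v)) := by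
  classical
  have hCv j := apply_map_eq_neg_smul_of_anticommute hTC (hvμ j)
  have hne j k : (μ j : ℂ) ≠ -(μ k : ℂ) := by
    exact_mod_cast fun h => hμ j k (by linarith)
  rw [orthonormal_iff_ite] at hv ⊢
  rintro (j | j) (k | k)
  · simpa using hv j k
  · simpa using hT.inner_eq_zero_of_apply_eq_smul (hne j k) (hvμ j) (hCv k)
  · simpa using hT.inner_eq_zero_of_apply_eq_smul (hne k j).symm (hCv j) (hvμ k)
  · simpa [hC, eq_comm] using hv k j

lemma two_mul_card_le_finrank_of_anticommute [FiniteDimensional ℂ E] (hT : T.IsSymmetric)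
    (hC : ∀ x y, ⟪C x, C y⟫_ℂ = ⟪y, x⟫_ℂ) (hTC : ∀ x, T (C x) = -C (T x))
    {m : Type*} [Fintype m] {v : m → E} (hv : Orthonormal ℂ v) {μ : m → ℝ}
    (hvμ : ∀ j, T (v j) = (μ j : ℂ) • v j) (hμ : ∀ j k, μ j + μ k ≠ 0) :
    2 * Fintype.card m ≤ finrank ℂ E := by
  simpa [two_mul] using (orthonormal_sum_elim_of_anticommute hT hC hTC hv hvμ hμ)
    |>.linearIndependent.fintype_card_le_finrank

theorem exists_orthonormal_sum_elim_pos_eigenvectors [FiniteDimensional ℂ E]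
    (hT : T.IsSymmetric) (hC : ∀ x y, ⟪C x, C y⟫_ℂ = ⟪y, x⟫_ℂ)
    (hTC : ∀ x, T (C x) = -C (T x)) (hT_inj : Function.Injective T) {N : ℕ}
    (hN : finrank ℂ E = 2 * N) :
    ∃ (v : Fin N → E) (Λ : Fin N → ℝ), (∀ k, 0 < Λ k) ∧
      Orthonormal ℂ (Sum.elim v (C ∘ v)) ∧ ∀ k, T (v k) = (Λ k : ℂ) • v k := by
  set B := hT.eigenvectorBasis hN
  set μ := hT.eigenvalues hN
  have hB j : T (B j) = (μ j : ℂ) • B j := hT.apply_eigenvectorBasis hN j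
  have hμ j : μ j ≠ 0 := fun h =>
    B.orthonormal.ne_zero j (hT_inj (by rw [hB, h, map_zero, Complex.ofReal_zero, zero_smul]))
  have card_le (s : Fin (2 * N) → Prop) [DecidablePred s]
      (hs : ∀ j k, s j → s k → μ j + μ k ≠ 0) : Fintype.card {j // s j} ≤ N := by
    have := two_mul_card_le_finrank_of_anticommute (m := {j // s j}) hT hC hTC
      (B.orthonormal.comp _ Subtype.val_injective) (fun j => hB j.1) fun j k => hs _ _ j.2 k.2
    omega
  have card_pos := card_le (fun j => 0 < μ j) fun j k hj hk => by positivity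
  have card_nonpos := card_le (fun j => ¬0 < μ j) fun j k hj hk =>
    (add_neg (lt_of_le_of_ne (not_lt.mp hj) (hμ j)) (lt_of_le_of_ne (not_lt.mp hk) (hμ k))).ne
  rw [Fintype.card_subtype_compl, Fintype.card_fin] at card_nonpos
  let e : Fin N ≃ {j // 0 < μ j} := (Fintype.equivFinOfCardEq (by omega)).symm
  refine ⟨fun k => B (e k), fun k => μ (e k), fun k => (e k).2, ?_, fun k => hB (e k)⟩
  exact orthonormal_sum_elim_of_anticommute hT hC hTC
    (B.orthonormal.comp _ (Subtype.val_injective.comp e.injective)) (fun k => hB (e k))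
    fun j k => (add_pos (e j).2 (e k).2).ne'

end LinearMap.IsSymmetric

end Anticommute

section Columns

variable {R m n : Type*} [Fintype n]

lemma conjTranspose_mul_self_eq_one_of_orthonormal {𝕜 : Type*} [RCLike 𝕜] [DecidableEq m]
    {f : m → EuclideanSpace 𝕜 n} (hf : Orthonormal 𝕜 f) :
    (of fun i j => f j i)ᴴ * of (fun i j => f j i) = 1 := by
  simpa using (gram_eq_conjTranspose_mul (EuclideanSpace.basisFun n 𝕜) f).symm.trans
    (gram_eq_one_iff_orthonormal.mpr hf)

lemma mul_eq_mul_diagonal_of_mulVec [CommSemiring R] [Fintype m] [DecidableEq m]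
    {A : Matrix n n R} {M : Matrix n m R} {d : m → R} (h : ∀ j, A *ᵥ Mᵀ j = d j • Mᵀ j) :
    A * M = M * diagonal d := by
  ext i j
  rw [mul_diagonal, mul_apply, mul_comm]
  exact congrFun (h j) i

end Columns

section ParticleHole

variable {ι : Type*}

def particleHoleConj : EuclideanSpace ℂ (ι ⊕ ι) →ₗ⋆[ℂ] EuclideanSpace ℂ (ι ⊕ ι) where
  toFun x := WithLp.toLp 2 fun a => conj (x a.swap)
  map_add' x y := by ext a; simp
  map_smul' c x := by ext a; simp

lemma particleHoleConj_apply (x : EuclideanSpace ℂ (ι ⊕ ι)) (a : ι ⊕ ι) :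
    particleHoleConj x a = conj (x a.swap) := rfl

lemma fromBlocks_neg_map_conj_apply_swap (a b : Matrix ι ι ℂ) (p q : ι ⊕ ι) :
    fromBlocks a b (-b.map conj) (-a.map conj) p q.swap =
      -conj (fromBlocks a b (-b.map conj) (-a.map conj) p.swap q) := by
  rcases p with i | i <;> rcases q with j | j <;> simp

lemma isHermitian_fromBlocks_neg_map_conj {a b : Matrix ι ι ℂ} (ha : a.IsHermitian)
    (hb : bᵀ = -b) : (fromBlocks a b (-b.map conj) (-a.map conj)).IsHermitian := by
  refine ha.fromBlocks ?_ ?_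
  · rw [conjTranspose, hb]
    ext i j
    simp
  · have : a.map conj = aᵀ := by ext i j; exact ha.apply j i
    exact this ▸ ha.transpose.neg

variable [Fintype ι]

lemma inner_particleHoleConj (x y : EuclideanSpace ℂ (ι ⊕ ι)) :
    ⟪particleHoleConj x, particleHoleConj y⟫_ℂ = ⟪y, x⟫_ℂ := by
  simp only [PiLp.inner_apply, particleHoleConj_apply]
  rw [← (Equiv.sumComm ι ι).sum_comp]
  simp [mul_comm]

lemma toEuclideanLin_fromBlocks_particleHoleConj [DecidableEq ι] (a b : Matrix ι ι ℂ)
    (x : EuclideanSpace ℂ (ι ⊕ ι)) :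
    toEuclideanLin (fromBlocks a b (-b.map conj) (-a.map conj)) (particleHoleConj x) =
      -particleHoleConj (toEuclideanLin (fromBlocks a b (-b.map conj) (-a.map conj)) x) := by
  ext p
  simp only [particleHoleConj_apply, toLpLin_apply, PiLp.neg_apply, mulVec, dotProduct]
  rw [← (Equiv.sumComm ι ι).sum_comp]
  simp [fromBlocks_neg_map_conj_apply_swap, map_sum]

end ParticleHole

/-- Bogoliubov-structured diagonalization: if the
quasi-particle Hamiltonian `𝓗 = [[h, Δ], [−Δ̄, −h̄]]` is invertible,
then there are `U, V` and a positive diagonal `Λ` such that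
`W = [[U, V̄], [V, Ū]]` is unitary and `𝓗 W = W [[Λ, 0], [0, −Λ]]`. -/
theorem quasiparticle_bogoliubov_diagonalization
    (Nb : ℕ)
    (h Δ : Matrix (Fin Nb) (Fin Nb) ℂ)
    (hh : hᴴ = h) (hΔ : Δᵀ = -Δ)
    (hinv : IsUnit (Matrix.fromBlocks h Δ (-(Δ.map (starRingEnd ℂ)))
        (-(h.map (starRingEnd ℂ))))) :
    ∃ (U V : Matrix (Fin Nb) (Fin Nb) ℂ) (Λ : Fin Nb → ℝ),
      (∀ i, 0 < Λ i) ∧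
      (Matrix.fromBlocks U (V.map (starRingEnd ℂ)) V (U.map (starRingEnd ℂ)))ᴴ *
        (Matrix.fromBlocks U (V.map (starRingEnd ℂ)) V (U.map (starRingEnd ℂ))) = 1 ∧
      (Matrix.fromBlocks h Δ (-(Δ.map (starRingEnd ℂ)))
          (-(h.map (starRingEnd ℂ)))) *
        (Matrix.fromBlocks U (V.map (starRingEnd ℂ)) V (U.map (starRingEnd ℂ))) =
      (Matrix.fromBlocks U (V.map (starRingEnd ℂ)) V (U.map (starRingEnd ℂ))) *
        (Matrix.fromBlocks (Matrix.diagonal (fun i => (Λ i : ℂ))) 0 0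
          (-(Matrix.diagonal (fun i => (Λ i : ℂ))))) := by
  set H := fromBlocks h Δ (-(Δ.map conj)) (-(h.map conj))
  have hT : (toEuclideanLin H).IsSymmetric :=
    isSymmetric_toEuclideanLin_iff.mpr (isHermitian_fromBlocks_neg_map_conj hh hΔ)
  have hT_inj : Function.Injective (toEuclideanLin H) := fun x y hxy =>
    WithLp.ofLp_injective 2 (mulVec_injective_iff_isUnit.mpr hinv (congrArg WithLp.ofLp hxy))
  have hTC := toEuclideanLin_fromBlocks_particleHoleConj h Δ
  obtain ⟨v, Λ, hΛ, hv, hvΛ⟩ := hT.exists_orthonormal_sum_elim_pos_eigenvectors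
    inner_particleHoleConj hTC hT_inj (N := Nb) (by simp [two_mul])
  let U : Matrix (Fin Nb) (Fin Nb) ℂ := of fun i k => v k (Sum.inl i)
  let V : Matrix (Fin Nb) (Fin Nb) ℂ := of fun i k => v k (Sum.inr i)
  have hW : fromBlocks U (V.map conj) V (U.map conj) =
      of fun p q => Sum.elim v (particleHoleConj ∘ v) q p := by
    ext (i | i) (k | k) <;> rfl
  refine ⟨U, V, Λ, hΛ, ?_, ?_⟩
  · rw [hW]
    exact conjTranspose_mul_self_eq_one_of_orthonormal hv
  · rw [hW, diagonal_neg, fromBlocks_diagonal]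
    refine mul_eq_mul_diagonal_of_mulVec ?_
    rintro (k | k)
    · exact congrArg WithLp.ofLp (hvΛ k)
    · exact congrArg WithLp.ofLp (apply_map_eq_neg_smul_of_anticommute hTC (hvΛ k))
end

section
/- Let h ∈ ℂ^{N_b×N_b} be Hermitian, Δ ∈ ℂ^{N_b×N_b} be antisymmetric, and 𝓗 = [[h, Δ], [−Δ̄, −h̄]]. Then for every λ ∈ ℂ, the dimension of the kernel of 𝓗 − λ·I equals the dimension of the kernel of 𝓗 + λ·I. In particular, the multiset of eigenvalues of 𝓗 (roots of its characteristic polynomial, with multiplicity) is invariant under negation, and when the eigenvalues are listed in nondecreasing order ε₁ ≤ ε₂ ≤ … ≤ ε_{2N_b}, one has ε_{N_b} ≤ 0 ≤ ε_{N_b+1}. -/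
/-!
With `S = [[0, 1], [1, 0]]` one has `S 𝓗ᵀ S = -𝓗`: the swap exchanges the diagonal blocks and
the off-diagonal ones, and `hᵀ = h̄`, `Δᵀ = -Δ` turn the result into `-𝓗`. So `-𝓗 - λ` is
similar to `(𝓗 - λ)ᵀ`, and rank and characteristic polynomial are invariant under similarity and
transposition. Since `χ_{-𝓗}(x) = ± χ_𝓗(-x)`, the eigenvalues are symmetric under negation, so at
most half of them are positive and at most half negative, which pins the middle of any ordered
listing.
-/

open Matrix Polynomial

namespace Matrix

variable {m n R : Type*} [Fintype n]

theorem rank_neg [CommRing R] (A : Matrix m n R) : (-A).rank = A.rank := by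
  rw [← neg_one_smul R A, rank_smul_of_mem_nonZeroDivisors _ isUnit_neg_one.mem_nonZeroDivisors]

theorem finrank_ker_mulVecLin_add_rank [Field R] (A : Matrix m n R) :
    Module.finrank R (LinearMap.ker A.mulVecLin) + A.rank = Fintype.card n := by
  rw [add_comm, rank, LinearMap.finrank_range_add_finrank_ker, Module.finrank_fintype_fun_eq_card]

variable [DecidableEq n]

theorem charpoly_neg [CommRing R] (A : Matrix n n R) :
    (-A).charpoly = (-1) ^ Fintype.card n * A.charpoly.comp (-X) := by
  have hmap : (compRingHom (-X)).mapMatrix (charmatrix A) = -charmatrix (-A) := by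
    ext i j : 1
    by_cases hij : i = j
    · subst hij
      simp only [RingHom.mapMatrix_apply, map_apply, coe_compRingHom_apply, charmatrix_apply_eq,
        neg_apply, sub_comp, X_comp, C_comp, map_neg]
      ring
    · simp [charmatrix_apply_ne _ _ _ hij]
  rw [charpoly, charpoly, ← coe_compRingHom_apply, RingHom.map_det, hmap, det_neg, ← mul_assoc,
    ← mul_pow, neg_one_mul, neg_neg, one_pow, one_mul]

theorem roots_charpoly_neg [CommRing R] [IsDomain R] (A : Matrix n n R) :
    (-A).charpoly.roots = A.charpoly.roots.map fun z => -z := by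
  have hne := (charpoly_monic (-A)).ne_zero
  rw [charpoly_neg] at hne ⊢
  rw [roots_mul hne, roots_pow, roots_neg, roots_one, roots_comp_neg_X]
  simp

theorem rank_units_conj [CommRing R] (P : (Matrix n n R)ˣ) (A : Matrix n n R) :
    (P.val * A * P.val⁻¹).rank = A.rank := by
  have hP : IsUnit P.val.det := (isUnit_iff_isUnit_det _).1 P.isUnit
  rw [rank_mul_eq_left_of_isUnit_det _ _ (isUnit_nonsing_inv_det _ hP),
    rank_mul_eq_right_of_isUnit_det _ _ hP]

theorem charpoly_neg_eq_of_neg_eq_units_conj_transpose [CommRing R] {A : Matrix n n R}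
    (P : (Matrix n n R)ˣ) (hP : -A = P.val * Aᵀ * P.val⁻¹) : (-A).charpoly = A.charpoly := by
  rw [hP, charpoly_units_conj, charpoly_transpose]

theorem rank_sub_smul_one_eq_of_neg_eq_units_conj_transpose [Field R] {A : Matrix n n R}
    (P : (Matrix n n R)ˣ) (hP : -A = P.val * Aᵀ * P.val⁻¹) (c : R) :
    (A - c • 1).rank = (A + c • 1).rank := by
  have hconj : P.val * (A - c • 1)ᵀ * P.val⁻¹ = -(A + c • 1) := by
    rw [transpose_sub, transpose_smul, transpose_one, Matrix.mul_sub, Matrix.sub_mul, ← hP,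
      Matrix.mul_smul, Matrix.smul_mul, Matrix.mul_one,
      mul_nonsing_inv _ ((isUnit_iff_isUnit_det _).1 P.isUnit)]
    abel
  rw [← rank_neg (A + c • 1), ← hconj, rank_units_conj, rank_transpose]

theorem fromBlocks_zero_one_one_zero_mul_self [Semiring R] :
    (fromBlocks 0 1 1 0 : Matrix (n ⊕ n) (n ⊕ n) R) * fromBlocks 0 1 1 0 = 1 := by
  simp [fromBlocks_multiply, fromBlocks_one]

theorem fromBlocks_zero_one_one_zero_conj [Semiring R] (A B C D : Matrix n n R) :
    fromBlocks 0 1 1 0 * fromBlocks A B C D * fromBlocks 0 1 1 0 = fromBlocks D C B A := by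
  simp [fromBlocks_multiply]

end Matrix

section Quasiparticle

variable {n R : Type*} [Fintype n] [DecidableEq n] [CommRing R] [StarRing R]

def quasiparticleHamiltonian (h Δ : Matrix n n R) : Matrix (n ⊕ n) (n ⊕ n) R :=
  fromBlocks h Δ (-Δ.map (starRingEnd R)) (-h.map (starRingEnd R))

theorem neg_quasiparticleHamiltonian {h Δ : Matrix n n R} (hh : hᴴ = h) (hΔ : Δᵀ = -Δ) :
    -quasiparticleHamiltonian h Δ =
      fromBlocks 0 1 1 0 * (quasiparticleHamiltonian h Δ)ᵀ * fromBlocks 0 1 1 0 := by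
  have hbarT : (h.map (starRingEnd R))ᵀ = h := by rw [← transpose_map]; exact hh
  have hT : hᵀ = h.map (starRingEnd R) := by rw [← transpose_transpose (h.map _), hbarT]
  have hΔbarT : (Δ.map (starRingEnd R))ᵀ = -Δ.map (starRingEnd R) := by
    rw [← transpose_map, hΔ, Matrix.map_neg _ (map_neg _)]
  rw [quasiparticleHamiltonian, fromBlocks_transpose, fromBlocks_zero_one_one_zero_conj,
    fromBlocks_neg]
  simp only [transpose_neg, hbarT, hT, hΔ, hΔbarT, neg_neg]

theorem exists_units_neg_quasiparticleHamiltonian_eq {h Δ : Matrix n n R} (hh : hᴴ = h)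
    (hΔ : Δᵀ = -Δ) : ∃ P : (Matrix (n ⊕ n) (n ⊕ n) R)ˣ,
      -quasiparticleHamiltonian h Δ = P.val * (quasiparticleHamiltonian h Δ)ᵀ * P.val⁻¹ := by
  have hS : (fromBlocks 0 1 1 0 : Matrix (n ⊕ n) (n ⊕ n) R) * fromBlocks 0 1 1 0 = 1 :=
    fromBlocks_zero_one_one_zero_mul_self
  refine ⟨⟨_, _, hS, hS⟩, ?_⟩
  rw [inv_eq_left_inv hS]
  exact neg_quasiparticleHamiltonian hh hΔ

end Quasiparticle

section SignCounts

open Finset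

theorem Monotone.card_Ici_le_card_filter_pos {m : ℕ} {ε : Fin m → ℝ} (hε : Monotone ε)
    {i : Fin m} (hi : 0 < ε i) : m - i ≤ #{j | 0 < ε j} := by
  rw [← Fin.card_Ici]
  exact card_le_card fun j hj => mem_filter.2 ⟨mem_univ j, hi.trans_le (hε (mem_Ici.1 hj))⟩

theorem Monotone.card_Iic_le_card_filter_neg {m : ℕ} {ε : Fin m → ℝ} (hε : Monotone ε)
    {i : Fin m} (hi : ε i < 0) : i + 1 ≤ #{j | ε j < 0} := by
  rw [← Fin.card_Iic]
  exact card_le_card fun j hj => mem_filter.2 ⟨mem_univ j, (hε (mem_Iic.1 hj)).trans_lt hi⟩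

variable {ι : Type*} [Fintype ι]

theorem card_filter_pos_add_card_filter_neg_le (ε : ι → ℝ) :
    #{i | 0 < ε i} + #{i | ε i < 0} ≤ Fintype.card ι := by
  classical
  rw [← card_union_of_disjoint (disjoint_filter.2 fun i _ hpos hneg => hpos.not_gt hneg)]
  exact card_le_univ _

theorem card_filter_neg_eq_card_filter_pos {ε : ι → ℝ}
    (hε : (univ.val.map ε).map Neg.neg = univ.val.map ε) :
    #{i | ε i < 0} = #{i | 0 < ε i} := by
  have := congrArg (Multiset.countP (0 < ·)) hε
  simp only [Multiset.countP_map, Multiset.map_map, Function.comp_apply, Left.neg_pos_iff] at this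
  exact this

theorem Monotone.le_zero_and_zero_le_of_map_neg_eq {n : ℕ} (hn : 0 < n) {ε : Fin (n + n) → ℝ}
    (hε : Monotone ε) (hsymm : (univ.val.map ε).map Neg.neg = univ.val.map ε) :
    ε ⟨n - 1, (Nat.sub_lt hn one_pos).trans_le (Nat.le_add_right n n)⟩ ≤ 0 ∧
      0 ≤ ε ⟨n, Nat.lt_add_of_pos_right hn⟩ := by
  have hcount := card_filter_neg_eq_card_filter_pos hsymm
  have htotal := card_filter_pos_add_card_filter_neg_le ε
  rw [Fintype.card_fin] at htotal
  constructor
  · by_contra! hpos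
    have := hε.card_Ici_le_card_filter_pos hpos
    dsimp only at this
    omega
  · by_contra! hneg
    have := hε.card_Iic_le_card_filter_neg hneg
    dsimp only at this
    omega

end SignCounts

/-- Spectral symmetry of the quasi-particle Hamiltonian
`𝓗 = [[h, Δ], [−Δ̄, −h̄]]`: the kernel of `𝓗 − λI` has the same
dimension as that of `𝓗 + λI` for every `λ`; the multiset of eigenvalues
(roots of the characteristic polynomial with multiplicity) is invariant
under negation; and any nondecreasing listing `ε` of the eigenvalues
satisfies `ε_{N_b} ≤ 0 ≤ ε_{N_b+1}`. -/
theorem quasiparticle_spectrum_symmetric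
    (Nb : ℕ) (hNb : 0 < Nb)
    (h Δ : Matrix (Fin Nb) (Fin Nb) ℂ)
    (hh : hᴴ = h) (hΔ : Δᵀ = -Δ) :
    (∀ lam : ℂ,
      Module.finrank ℂ (LinearMap.ker
        ((Matrix.fromBlocks h Δ (-(Δ.map (starRingEnd ℂ)))
            (-(h.map (starRingEnd ℂ))) - lam • 1).mulVecLin)) =
      Module.finrank ℂ (LinearMap.ker
        ((Matrix.fromBlocks h Δ (-(Δ.map (starRingEnd ℂ)))
            (-(h.map (starRingEnd ℂ))) + lam • 1).mulVecLin))) ∧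
    ((Matrix.fromBlocks h Δ (-(Δ.map (starRingEnd ℂ)))
        (-(h.map (starRingEnd ℂ)))).charpoly.roots.map (fun z => -z) =
      (Matrix.fromBlocks h Δ (-(Δ.map (starRingEnd ℂ)))
        (-(h.map (starRingEnd ℂ)))).charpoly.roots) ∧
    (∀ ε : Fin (Nb + Nb) → ℝ, Monotone ε →
      (Finset.univ.val.map fun i => ((ε i : ℂ))) =
        (Matrix.fromBlocks h Δ (-(Δ.map (starRingEnd ℂ)))
          (-(h.map (starRingEnd ℂ)))).charpoly.roots →
      ε ⟨Nb - 1, by omega⟩ ≤ 0 ∧ 0 ≤ ε ⟨Nb, by omega⟩) := by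
  set H := fromBlocks h Δ (-(Δ.map (starRingEnd ℂ))) (-(h.map (starRingEnd ℂ)))
  obtain ⟨P, hP⟩ : ∃ P : (Matrix _ _ ℂ)ˣ, -H = P.val * Hᵀ * P.val⁻¹ :=
    exists_units_neg_quasiparticleHamiltonian_eq hh hΔ
  have hroots : H.charpoly.roots.map (fun z => -z) = H.charpoly.roots := by
    rw [← roots_charpoly_neg, charpoly_neg_eq_of_neg_eq_units_conj_transpose P hP]
  refine ⟨fun lam => ?_, hroots, fun ε hε hε_roots => ?_⟩
  · have hsub := finrank_ker_mulVecLin_add_rank (H - lam • 1)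
    have hadd := finrank_ker_mulVecLin_add_rank (H + lam • 1)
    have := rank_sub_smul_one_eq_of_neg_eq_units_conj_transpose P hP lam
    omega
  · have hsymm : (Finset.univ.val.map ε).map Neg.neg = Finset.univ.val.map ε := by
      refine Multiset.map_injective Complex.ofReal_injective ?_
      rw [← hε_roots] at hroots
      simpa [Multiset.map_map, Function.comp_def] using hroots
    exact hε.le_zero_and_zero_le_of_map_neg_eq hNb hsymm
end

section
/- Let A, L, U ∈ ℂ^{n×n} with A = LU, where L is unit lower triangular (L_{ii} = 1 for all i and L_{ij} = 0 for i < j) and U is upper triangular (U_{ij} = 0 for i > j) with all diagonal entries U_{kk} ≠ 0. Then A is invertible, and for every index k: (i) for all i > k, (A⁻¹)_{ik} = −Σ_{j > k} (A⁻¹)_{ij} L_{jk}; (ii) for all j > k, (A⁻¹)_{kj} = −U_{kk}⁻¹ Σ_{i > k} U_{ki} (A⁻¹)_{ij}; and (iii) (A⁻¹)_{kk} = U_{kk}⁻¹ (1 − Σ_{i > k} U_{ki} (A⁻¹)_{ik}). -/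
open Matrix

/-- Selected inversion identities (Erisman–Tinney):
given `A = LU` with `L` unit lower triangular and `U` upper triangular
with nonzero diagonal, `A` is invertible and the entries of `A⁻¹` in
column/row `k` (for indices beyond `k`) satisfy the stated recurrences. -/
theorem selected_inversion_identities
    (n : ℕ) (A L U : Matrix (Fin n) (Fin n) ℂ)
    (hA : A = L * U)
    (hLdiag : ∀ i, L i i = 1)
    (hLupper : ∀ i j, i < j → L i j = 0)
    (hUlower : ∀ i j, j < i → U i j = 0)
    (hUdiag : ∀ k, U k k ≠ 0) :
    IsUnit A ∧
    ∀ k : Fin n,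
      (∀ i : Fin n, k < i →
        A⁻¹ i k = -∑ j ∈ Finset.univ.filter (fun j => k < j), A⁻¹ i j * L j k) ∧
      (∀ j : Fin n, k < j →
        A⁻¹ k j = -(U k k)⁻¹ *
          ∑ i ∈ Finset.univ.filter (fun i => k < i), U k i * A⁻¹ i j) ∧
      A⁻¹ k k = (U k k)⁻¹ *
        (1 - ∑ i ∈ Finset.univ.filter (fun i => k < i), U k i * A⁻¹ i k) := by
  have hLbt : L.BlockTriangular OrderDual.toDual := fun i j h => hLupper i j h
  have hUbt : U.BlockTriangular id := fun i j h => hUlower i j h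
  have hLdet : L.det = 1 := by
    rw [Matrix.det_of_lowerTriangular L hLbt]
    simp [hLdiag]
  have hLdetU : IsUnit L.det := by simp [hLdet]
  have hUdet : IsUnit U.det := by
    rw [Matrix.det_of_upperTriangular hUbt]
    exact (Finset.prod_ne_zero_iff.mpr fun i _ => hUdiag i).isUnit
  haveI : Invertible L := L.invertibleOfIsUnitDet hLdetU
  haveI : Invertible U := U.invertibleOfIsUnitDet hUdet
  haveI : Invertible A := hA ▸ invertibleMul L U
  have hLinv : L⁻¹.BlockTriangular OrderDual.toDual :=
    blockTriangular_inv_of_blockTriangular hLbt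
  have hUinv : U⁻¹.BlockTriangular id :=
    blockTriangular_inv_of_blockTriangular hUbt
  -- diagonal of L⁻¹ is 1
  have hLinvdiag : ∀ k, L⁻¹ k k = 1 := by
    intro k
    have h1 := congrFun (congrFun (Matrix.mul_nonsing_inv L hLdetU) k) k
    simp only [Matrix.mul_apply, Matrix.one_apply_eq] at h1
    have h2 : ∑ j, L k j * L⁻¹ j k = L k k * L⁻¹ k k := by
      refine Finset.sum_eq_single k (fun j _ hj => ?_) (by simp)
      rcases lt_or_gt_of_ne hj with hlt | hgt
      · rw [hLinv (show OrderDual.toDual k < OrderDual.toDual j from hlt), mul_zero]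
      · rw [hLupper k j hgt, zero_mul]
    rw [h2, hLdiag, one_mul] at h1
    exact h1
  have hAiL : A⁻¹ * L = U⁻¹ := by
    rw [hA, Matrix.mul_inv_rev, Matrix.mul_assoc, Matrix.nonsing_inv_mul L hLdetU,
      Matrix.mul_one]
  have hUAi : U * A⁻¹ = L⁻¹ := by
    rw [hA, Matrix.mul_inv_rev, ← Matrix.mul_assoc, Matrix.mul_nonsing_inv U hUdet,
      Matrix.one_mul]
  refine ⟨isUnit_of_invertible A, fun k => ⟨?_, ?_, ?_⟩⟩
  · -- column identity
    intro i hik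
    have h0 : (A⁻¹ * L) i k = 0 := by
      rw [hAiL]; exact hUinv (show (id k : Fin n) < id i from hik)
    rw [Matrix.mul_apply] at h0
    have hsplit : ∑ j, A⁻¹ i j * L j k
        = A⁻¹ i k * L k k + ∑ j ∈ Finset.univ.filter (fun j => k < j), A⁻¹ i j * L j k := by
      rw [← Finset.add_sum_erase _ _ (Finset.mem_univ k)]
      congr 1
      refine (Finset.sum_subset ?_ ?_).symm
      · intro j hj
        simp only [Finset.mem_filter, Finset.mem_univ, true_and] at hj
        simp [Finset.mem_erase, ne_of_gt hj]
      · intro j hj hj'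
        simp only [Finset.mem_erase, Finset.mem_univ, and_true] at hj
        simp only [Finset.mem_filter, Finset.mem_univ, true_and] at hj'
        have : j < k := lt_of_le_of_ne (not_lt.mp hj') hj
        rw [hLupper j k this, mul_zero]
    rw [hsplit, hLdiag, mul_one] at h0
    linear_combination h0
  · -- row identity
    intro j hkj
    have h0 : (U * A⁻¹) k j = 0 := by
      rw [hUAi]
      exact hLinv (show OrderDual.toDual j < OrderDual.toDual k from hkj)
    rw [Matrix.mul_apply] at h0
    have hsplit : ∑ i, U k i * A⁻¹ i j
        = U k k * A⁻¹ k j + ∑ i ∈ Finset.univ.filter (fun i => k < i), U k i * A⁻¹ i j := by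
      rw [← Finset.add_sum_erase _ _ (Finset.mem_univ k)]
      congr 1
      refine (Finset.sum_subset ?_ ?_).symm
      · intro i hi
        simp only [Finset.mem_filter, Finset.mem_univ, true_and] at hi
        simp [Finset.mem_erase, ne_of_gt hi]
      · intro i hi hi'
        simp only [Finset.mem_erase, Finset.mem_univ, and_true] at hi
        simp only [Finset.mem_filter, Finset.mem_univ, true_and] at hi'
        have : i < k := lt_of_le_of_ne (not_lt.mp hi') hi
        rw [hUlower k i this, zero_mul]
    rw [hsplit] at h0
    have hS : ∑ i ∈ Finset.univ.filter (fun i => k < i), U k i * A⁻¹ i j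
        = -(U k k * A⁻¹ k j) := by linear_combination h0
    rw [hS, neg_mul_neg, ← mul_assoc, inv_mul_cancel₀ (hUdiag k), one_mul]
  · -- diagonal identity
    have h0 : (U * A⁻¹) k k = 1 := by rw [hUAi]; exact hLinvdiag k
    rw [Matrix.mul_apply] at h0
    have hsplit : ∑ i, U k i * A⁻¹ i k
        = U k k * A⁻¹ k k + ∑ i ∈ Finset.univ.filter (fun i => k < i), U k i * A⁻¹ i k := by
      rw [← Finset.add_sum_erase _ _ (Finset.mem_univ k)]
      congr 1
      refine (Finset.sum_subset ?_ ?_).symm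
      · intro i hi
        simp only [Finset.mem_filter, Finset.mem_univ, true_and] at hi
        simp [Finset.mem_erase, ne_of_gt hi]
      · intro i hi hi'
        simp only [Finset.mem_erase, Finset.mem_univ, and_true] at hi
        simp only [Finset.mem_filter, Finset.mem_univ, true_and] at hi'
        have : i < k := lt_of_le_of_ne (not_lt.mp hi') hi
        rw [hUlower k i this, zero_mul]
    rw [hsplit] at h0
    have hS : 1 - ∑ i ∈ Finset.univ.filter (fun i => k < i), U k i * A⁻¹ i k
        = U k k * A⁻¹ k k := by linear_combination -h0
    rw [hS, ← mul_assoc, inv_mul_cancel₀ (hUdiag k), one_mul]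
end
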